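/- Let $n \ge 1$, let $y_0, \ldots, y_{n-1}$ be real numbers, and for $\beta > 0$ define softmax probabilities $p_i(\beta) = e^{\beta y_i} / \sum_{j} e^{\beta y_j}$. Then the entropy $H(\beta) = -\sum_i p_i(\beta)\log p_i(\beta)$ is monotonically decreasing on $(0,\infty)$. -/

import Mathlib

open Real Finset

noncomputable def softmaxN (n : ℕ) (y : Fin n → ℝ) (β : ℝ) (i : Fin n) : ℝ :=
  Real.exp (β * y i) / ∑ j, Real.exp (β * y j)

noncomputable def softmaxEntropyN (n : ℕ) (y : Fin n → ℝ) (β : ℝ) : ℝ :=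
  -∑ i, softmaxN n y β i * Real.log (softmaxN n y β i)

/-!
Write `Z(β) = ∑ exp (β yᵢ)` for the partition function and `m(β)`, `v(β)` for the mean and the
variance of `y` under the softmax distribution. Then `H(β) = log Z(β) - β m(β)`, and since
`(log Z)' = m` and `m' = v`, the derivative of the entropy is `H'(β) = -β v(β)`, which is `≤ 0` for `β ≥ 0` because
`v ≥ 0` by Cauchy–Schwarz.
-/

section ExpMoment

variable {ι : Type*} [Fintype ι] (y : ι → ℝ)

noncomputable def expMoment (k : ℕ) (β : ℝ) : ℝ := ∑ i, y i ^ k * exp (β * y i)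

noncomputable def expMean (β : ℝ) : ℝ := expMoment y 1 β / expMoment y 0 β

noncomputable def expVariance (β : ℝ) : ℝ := expMoment y 2 β / expMoment y 0 β - expMean y β ^ 2

lemma expMoment_zero (β : ℝ) : expMoment y 0 β = ∑ i, exp (β * y i) := by
  simp [expMoment]

lemma expMoment_zero_pos [Nonempty ι] (β : ℝ) : 0 < expMoment y 0 β := by
  rw [expMoment_zero]
  exact sum_pos (fun i _ => exp_pos _) univ_nonempty

lemma hasDerivAt_expMoment (k : ℕ) (β : ℝ) :
    HasDerivAt (expMoment y k) (expMoment y (k + 1) β) β :=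
  HasDerivAt.fun_sum fun i _ =>
    (((hasDerivAt_mul_const (y i)).exp).const_mul (y i ^ k)).congr_deriv (by ring)

lemma expMoment_one_sq_le (β : ℝ) : expMoment y 1 β ^ 2 ≤ expMoment y 0 β * expMoment y 2 β :=
  sum_sq_le_sum_mul_sum_of_sq_le_mul _ (fun i _ => by positivity) (fun i _ => by positivity)
    (fun i _ => le_of_eq (by ring))

lemma expVariance_nonneg [Nonempty ι] (β : ℝ) : 0 ≤ expVariance y β := by
  have hZ := expMoment_zero_pos y β
  rw [expVariance, expMean, sub_nonneg, div_pow, div_le_div_iff₀ (by positivity) hZ]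
  nlinarith [mul_le_mul_of_nonneg_right (expMoment_one_sq_le y β) hZ.le]

lemma hasDerivAt_log_expMoment_zero [Nonempty ι] (β : ℝ) :
    HasDerivAt (fun β => log (expMoment y 0 β)) (expMean y β) β :=
  (hasDerivAt_expMoment y 0 β).log (expMoment_zero_pos y β).ne'

lemma hasDerivAt_expMean [Nonempty ι] (β : ℝ) :
    HasDerivAt (expMean y) (expVariance y β) β := by
  have hZ := (expMoment_zero_pos y β).ne'
  refine ((hasDerivAt_expMoment y 1 β).div (hasDerivAt_expMoment y 0 β) hZ).congr_deriv ?_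
  rw [expVariance, expMean]
  field_simp

lemma hasDerivAt_log_expMoment_zero_sub_mul_expMean [Nonempty ι] (β : ℝ) :
    HasDerivAt (fun β => log (expMoment y 0 β) - β * expMean y β) (-(β * expVariance y β)) β := by
  refine ((hasDerivAt_log_expMoment_zero y β).sub
    ((hasDerivAt_id β).mul (hasDerivAt_expMean y β))).congr_deriv ?_
  simp

lemma antitoneOn_log_expMoment_zero_sub_mul_expMean [Nonempty ι] :
    AntitoneOn (fun β => log (expMoment y 0 β) - β * expMean y β) (Set.Ici 0) := by
  have hderiv := hasDerivAt_log_expMoment_zero_sub_mul_expMean y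
  refine antitoneOn_of_hasDerivWithinAt_nonpos (convex_Ici 0)
    (fun β _ => (hderiv β).continuousAt.continuousWithinAt)
    (fun β _ => (hderiv β).hasDerivWithinAt) fun β hβ => ?_
  rw [interior_Ici] at hβ
  exact neg_nonpos.mpr (mul_nonneg (le_of_lt hβ) (expVariance_nonneg y β))

end ExpMoment

lemma softmaxEntropyN_eq {n : ℕ} [NeZero n] (y : Fin n → ℝ) (β : ℝ) :
    softmaxEntropyN n y β = log (expMoment y 0 β) - β * expMean y β := by
  have hZ := expMoment_zero_pos y β
  have hsoftmax : ∀ i, softmaxN n y β i = exp (β * y i) / expMoment y 0 β := by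
    simp [softmaxN, expMoment_zero]
  have hlog : ∀ i, log (softmaxN n y β i) = β * y i - log (expMoment y 0 β) := fun i => by
    rw [hsoftmax, log_div (exp_ne_zero _) hZ.ne', log_exp]
  have hsum : ∑ i, softmaxN n y β i * log (softmaxN n y β i)
      = (β * expMoment y 1 β - log (expMoment y 0 β) * expMoment y 0 β) / expMoment y 0 β := by
    have hterm : ∀ i, softmaxN n y β i * log (softmaxN n y β i)
        = (β * (y i ^ 1 * exp (β * y i)) - log (expMoment y 0 β) * (y i ^ 0 * exp (β * y i)))
          / expMoment y 0 β := fun i => by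
      rw [hlog, hsoftmax]
      ring
    rw [sum_congr rfl fun i _ => hterm i, ← sum_div, sum_sub_distrib, ← mul_sum, ← mul_sum]
    rfl
  rw [softmaxEntropyN, hsum, expMean]
  field_simp
  ring

theorem stmt_2 (n : ℕ) (hn : 1 ≤ n) (y : Fin n → ℝ) :
    AntitoneOn (softmaxEntropyN n y) (Set.Ioi 0) := by
  have : NeZero n := ⟨by omega⟩
  rw [funext (softmaxEntropyN_eq y)]
  exact (antitoneOn_log_expMoment_zero_sub_mul_expMean y).mono Set.Ioi_subset_Ici_self
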